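/- Let α : Λ̃ → X be an order-preserving map to a poset (X, ⪰) (i.e., λ ≥ μ implies α(λ) ⪰ α(μ)). Define T⁺_α(λ) = ∪_{μ: α(λ)=α(μ)} T(λ,μ) and T⁻_α(λ) = ∪_{μ: α(λ)≻α(μ)} T(λ,μ), and let A^α be the R-span of all c^λ_{s,t} with s,t both in T⁺_α(λ) or both in T⁻_α(λ). Then A^α is a subalgebra of A containing 1_A, and A^α is a cellular algebra with cellular basis Z^α = {c^λ_{s,t} : s,t ∈ I(λ,ε), (λ,ε) ∈ Ω} with respect to the poset Ω ordered by (λ,ε) > (λ',ε') iff ε > ε', or ε = ε' and λ > λ'. -/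

import Mathlib

open MulOpposite

noncomputable section

universe u

section CompFactors

variable (A : Type u) [Ring A]

/-- The `i`-th factor of a series of submodules. -/
abbrev CompSeriesFactor {M : Type u} [AddCommGroup M] [Module A M]
    (s : CompositionSeries (Submodule A M)) (i : Fin s.length) : Type u :=
  ↥(s i.succ) ⧸ Submodule.comap (s i.succ).subtype (s i.castSucc)

open Classical in
/-- The multiplicity of `N` among the composition factors of `M` (returning `0` if `M`
has no composition series); by the Jordan–Hölder theorem this does not depend on the
choice of composition series. -/
def compMult (M : Type u) [AddCommGroup M] [Module A M]
    (N : Type u) [AddCommGroup N] [Module A N] : ℕ :=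
  if h : ∃ s : CompositionSeries (Submodule A M), s.head = ⊥ ∧ s.last = ⊤ then
    (Finset.univ.filter fun i : Fin h.choose.length =>
      Nonempty (CompSeriesFactor A h.choose i ≃ₗ[A] N)).card
  else 0

/-- `N` is (isomorphic to) a composition factor, i.e. a simple subquotient, of `M`. -/
def IsCompFactor (M N : Type u) [AddCommGroup M] [Module A M]
    [AddCommGroup N] [Module A N] : Prop :=
  ∃ p q : Submodule A M, p ≤ q ∧
    IsSimpleModule A (↥q ⧸ Submodule.comap q.subtype p) ∧
    Nonempty ((↥q ⧸ Submodule.comap q.subtype p) ≃ₗ[A] N)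

/-- `M₁` and `M₂` have a common composition factor. -/
def ShareFactor (M₁ M₂ : Type u) [AddCommGroup M₁] [Module A M₁]
    [AddCommGroup M₂] [Module A M₂] : Prop :=
  ∃ (p q : Submodule A M₁) (p' q' : Submodule A M₂), p ≤ q ∧ p' ≤ q' ∧
    IsSimpleModule A (↥q ⧸ Submodule.comap q.subtype p) ∧
    Nonempty ((↥q ⧸ Submodule.comap q.subtype p) ≃ₗ[A]
      (↥q' ⧸ Submodule.comap q'.subtype p'))

/-- `e` is a primitive central idempotent (a block idempotent) of `A`. -/
def IsPrimCentralIdem (e : A) : Prop :=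
  IsIdempotentElem e ∧ e ∈ Set.center A ∧ e ≠ 0 ∧
    ∀ f g : A, IsIdempotentElem f → IsIdempotentElem g → f ∈ Set.center A →
      g ∈ Set.center A → f * g = 0 → e = f + g → f = 0 ∨ g = 0

/-- A module belongs to the block of the central idempotent `e` when `e` acts as
the identity on it. -/
def InBlock (e : A) (M : Type u) [AddCommGroup M] [Module A M] : Prop :=
  ∀ m : M, e • m = m

/-- `P` is a projective cover of `L`. -/
def IsProjCover (P L : Type u) [AddCommGroup P] [Module A P]
    [AddCommGroup L] [Module A L] : Prop :=
  Module.Projective A P ∧ ∃ f : P →ₗ[A] L, Function.Surjective f ∧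
    ∀ N : Submodule A P, N ⊔ LinearMap.ker f = ⊤ → N = ⊤

end CompFactors

/-- The bilinear form on `ι → R` induced by a matrix `φ`. -/
def formSum {R ι : Type u} [CommRing R] [Fintype ι] (φ : ι → ι → R) (x y : ι → R) : R :=
  ∑ s, ∑ t, x s * φ s t * y t

section Cellular

variable (R A : Type u) [CommRing R] [Ring A] [Algebra R A]
variable (Λp : Type u) [PartialOrder Λp] (T : Λp → Type u) [∀ l, Fintype (T l)]

/-- A cell datum (Graham–Lehrer) for the `R`-algebra `A`: a cellular basis
`c l s t` indexed by pairs of elements of `T l` for `l` in the poset `Λp`, an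
anti-automorphism `star` swapping the two indices, and structure constants
`coeff` for right multiplication, acting on the second index modulo higher terms. -/
structure CellDatum where
  c : ∀ l, T l → T l → A
  basis : Module.Basis ((l : Λp) × (T l × T l)) R A
  basis_eq : ∀ l s t, basis ⟨l, (s, t)⟩ = c l s t
  star : A →ₗ[R] A
  star_mul : ∀ a b, star (a * b) = star b * star a
  star_c : ∀ l s t, star (c l s t) = c l t s
  coeff : ∀ l, T l → A → T l → R
  mul_rule : ∀ (l) (s t : T l) (a : A),
    c l s t * a - ∑ v, coeff l t a v • c l s v ∈
      Submodule.span R {x : A | ∃ l' s' t', l < l' ∧ x = c l' s' t'}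

variable {R A Λp T}

namespace CellDatum

variable (D : CellDatum R A Λp T)

/-- The span of the cellular basis elements with index strictly above `l`. -/
def Aup (l : Λp) : Submodule R A :=
  Submodule.span R {x : A | ∃ l' s' t', l < l' ∧ x = D.c l' s' t'}

/-- The span of the cellular basis elements with index in `P`. -/
def cellSpan (P : Set Λp) : Submodule R A :=
  Submodule.span R {x : A | ∃ l s t, l ∈ P ∧ x = D.c l s t}

/-- The data of right standard (cell) modules: each `T l → R` is a right `A`-module
(i.e. a module over `Aᵐᵒᵖ`), the action is `R`-bilinear, and on the standard basis it is
given by the structure constants of the cell datum. -/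
def RightStd [∀ l, DecidableEq (T l)] [∀ l, Module Aᵐᵒᵖ (T l → R)] : Prop :=
  (∀ (l : Λp) (r : R) (a : Aᵐᵒᵖ) (x : T l → R), a • (r • x) = r • (a • x)) ∧
  (∀ (l : Λp) (t : T l) (a : A),
    (op a) • (Pi.single t 1 : T l → R) = fun v => D.coeff l t a v)

/-- The data of left standard (cell) modules. -/
def LeftStd [∀ l, DecidableEq (T l)] [∀ l, Module A (T l → R)] : Prop :=
  (∀ (l : Λp) (r : R) (a : A) (x : T l → R), a • (r • x) = r • (a • x)) ∧
  (∀ (l : Λp) (t : T l) (a : A),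
    a • (Pi.single t 1 : T l → R) = fun v => D.coeff l t (D.star a) v)

/-- `φ` is the matrix of the canonical bilinear form on the standard modules:
`c l u s * c l t v ≡ φ l s t • c l u v` modulo `A^{∨l}`. -/
def FormData (φ : ∀ l, T l → T l → R) : Prop :=
  ∀ (l : Λp) (s t u v : T l), D.c l u s * D.c l t v - φ l s t • D.c l u v ∈ D.Aup l

section Idem

variable {Λt M X : Type u} [PartialOrder Λt] [PartialOrder X] [Fintype M]

/-- Assumptions (A1)–(A4): `ι : Λp → Λt` realizes the cell poset inside the
bigger poset `Λt`, `κ : M → Λt` realizes the index set of the orthogonal idempotent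
decomposition `1 = ∑ e μ`, each `e μ` lies in the span of the `c l s t` with
`ι l ≥ κ μ`, and every column of the cellular basis is fixed by some `e μ`. -/
structure IdemData (ι : Λp → Λt) (κ : M → Λt) (e : M → A) : Prop where
  order_iff : ∀ l l', ι l ≤ ι l' ↔ l ≤ l'
  kappa_inj : Function.Injective κ
  ne_zero : ∀ μ, e μ ≠ 0
  idem : ∀ μ, e μ * e μ = e μ
  orth : ∀ μ ν, μ ≠ ν → e μ * e ν = 0
  sum_one : ∑ μ, e μ = 1
  mem_span : ∀ μ, e μ ∈ Submodule.span R {x : A | ∃ l s t, κ μ ≤ ι l ∧ x = D.c l s t}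
  exists_idem : ∀ (l) (t : T l), ∃ μ, (∀ s, D.c l s t * e μ = D.c l s t) ∧
    (∀ u, e μ * D.c l t u = D.c l t u)

/-- `T(λ,μ)`: the indices `t` whose column (resp. row) of the cellular basis is fixed
by right (resp. left) multiplication by `e μ`. -/
def Tset (e : M → A) (l : Λp) (μ : M) : Set (T l) :=
  {t | (∀ s, D.c l s t * e μ = D.c l s t) ∧ (∀ u, e μ * D.c l t u = D.c l t u)}

/-- `T⁺_α(λ)`. -/
def Tplus (e : M → A) (ι : Λp → Λt) (κ : M → Λt) (α : Λt → X) (l : Λp) : Set (T l) :=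
  {t | ∃ μ, t ∈ D.Tset e l μ ∧ α (ι l) = α (κ μ)}

/-- `T⁻_α(λ)`. -/
def Tminus (e : M → A) (ι : Λp → Λt) (κ : M → Λt) (α : Λt → X) (l : Λp) : Set (T l) :=
  {t | ∃ μ, t ∈ D.Tset e l μ ∧ α (κ μ) < α (ι l)}

/-- `I(λ,ε)`: `T⁺_α(λ)` for `ε = false` and `T⁻_α(λ)` for `ε = true`. -/
def Iset (e : M → A) (ι : Λp → Λt) (κ : M → Λt) (α : Λt → X) (l : Λp) : Bool → Set (T l)
  | false => D.Tplus e ι κ α l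
  | true => D.Tminus e ι κ α l

/-- `J̃(λ,ε)`: `T⁺_α(λ)` for `ε = false` and all of `T(λ)` for `ε = true`. -/
def Jset (e : M → A) (ι : Λp → Λt) (κ : M → Λt) (α : Λt → X) (l : Λp) : Bool → Set (T l)
  | false => D.Tplus e ι κ α l
  | true => Set.univ

/-- The Levi type subalgebra `A^α` (as a submodule). -/
def levi (e : M → A) (ι : Λp → Λt) (κ : M → Λt) (α : Λt → X) : Submodule R A :=
  Submodule.span R {x : A | ∃ l ε s t, s ∈ D.Iset e ι κ α l ε ∧ t ∈ D.Iset e ι κ α l ε ∧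
    x = D.c l s t}

/-- The parabolic type subalgebra `Ã^α` (as a submodule). -/
def parab (e : M → A) (ι : Λp → Λt) (κ : M → Λt) (α : Λt → X) : Submodule R A :=
  Submodule.span R {x : A | ∃ l ε s t, s ∈ D.Iset e ι κ α l ε ∧ t ∈ D.Jset e ι κ α l ε ∧
    x = D.c l s t}

/-- The span of the elements of the cellular basis of `A^α` of index strictly
above `(l,ε)` in `Ω`. -/
def upperOm (e : M → A) (ι : Λp → Λt) (κ : M → Λt) (α : Λt → X) (p : Λp × Bool) :
    Submodule R A :=
  Submodule.span R {x : A | ∃ (q : Λp × Bool) (s t : T q.1),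
    ((p.2 < q.2) ∨ (p.2 = q.2 ∧ p.1 < q.1)) ∧
    s ∈ D.Iset e ι κ α q.1 q.2 ∧ t ∈ D.Iset e ι κ α q.1 q.2 ∧ x = D.c q.1 s t}

/-- The span of the elements of the standard basis of `Ã^α` of index strictly
above `(l,ε)` in `Ω`. -/
def upperOmParab (e : M → A) (ι : Λp → Λt) (κ : M → Λt) (α : Λt → X) (p : Λp × Bool) :
    Submodule R A :=
  Submodule.span R {x : A | ∃ (q : Λp × Bool) (s t : T q.1),
    ((p.2 < q.2) ∨ (p.2 = q.2 ∧ p.1 < q.1)) ∧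
    s ∈ D.Iset e ι κ α q.1 q.2 ∧ t ∈ D.Jset e ι κ α q.1 q.2 ∧ x = D.c q.1 s t}

end Idem

end CellDatum

end Cellular

/-!
Every `t ∈ T(λ)` lies in `T(λ, μ)` for exactly one `μ`, and (A3) forces `κ μ ≤ ι λ`, so with
`α` monotone `T⁻_α(λ)` is the complement of `T⁺_α(λ)`; thus `c^λ_{xy} ∈ A^α` iff `x` and `y`
are both in `T⁺_α(λ)` or both outside it. Multiplying by `e μ` on the left (right) keeps exactly
the basis elements whose row (column) belongs to `μ`. Hence `c^{λ₁}_{st} c^{λ₂}_{s't'}` vanishes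
unless `t` and `s'` belong to the same `μ`, and otherwise it is a combination of `c^L_{xy}` with
`L ≥ λ₁, λ₂`, `x` belonging with `s` and `y` with `t'`; comparing `α(κ ·)` with
`α(ι λ₁), α(ι λ₂) ≤ α(ι L)` along the chain `s, t, s', t'` shows `x ∈ T⁺_α(L) ↔ y ∈ T⁺_α(L)`.
So `A^α` is closed under products and contains every `e μ`, hence `1`. The cell structure is
inherited from `A`: the structure constants of `c^λ_{st} a` for `a ∈ A^α` are coefficients of an
element of `A^α`, and the error terms lie above `(λ, ε)` in `Ω` because a row in `T⁻_α(λ)`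
stays in `T⁻_α(L)` for `L ≥ λ`.
-/

open Submodule

lemma eq_iff_eq_of_chain {X : Type*} [PartialOrder X] {a b a' b' c₁ c₂ c : X}
    (ha : a ≤ c₁) (hb : b ≤ c₁) (ha' : a' ≤ c₂) (hb' : b' ≤ c₂) (h₁ : c₁ ≤ c) (h₂ : c₂ ≤ c)
    (hab : a = c₁ ↔ b = c₁) (hab' : a' = c₂ ↔ b' = c₂) (hba' : b = a') : a = c ↔ b' = c := by
  grind [le_antisymm]

namespace Module.Basis

variable {ι R M : Type*} [Ring R] [AddCommGroup M] [Module R M] {b : Basis ι R M}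

lemma sub_mem_span_image_inter {x w : M} {s t u : Set ι} (hx : x ∈ span R (b '' s))
    (hw : w ∈ span R (b '' u)) (hxw : x - w ∈ span R (b '' t)) (htu : Disjoint t u) :
    x - w ∈ span R (b '' (s ∩ t)) := by
  rw [b.mem_span_image] at *
  intro i hi
  have hit := hxw hi
  have hw0 : b.repr w i = 0 := Finsupp.notMem_support_iff.1 fun h => htu.ne_of_mem hit (hw h) rfl
  refine ⟨hx (Finsupp.mem_support_iff.2 fun hx0 => ?_), hit⟩
  exact Finsupp.mem_support_iff.1 hi (by simp [hx0, hw0])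

end Module.Basis

namespace CellDatum

variable {R A : Type u} [CommRing R] [Ring A] [Algebra R A]
  {Λp : Type u} [PartialOrder Λp] {T : Λp → Type u} [∀ l, Fintype (T l)]
  (D : CellDatum R A Λp T)

lemma star_star (x : A) : D.star (D.star x) = x := by
  have h : D.star ∘ₗ D.star = LinearMap.id :=
    D.basis.ext fun ⟨l, s, t⟩ => by simp only [LinearMap.comp_apply, D.basis_eq, D.star_c,
      LinearMap.id_apply]
  exact DFunLike.congr_fun h x

lemma cellSpan_eq_span_basis (P : Set Λp) :
    D.cellSpan P = span R (D.basis '' {i | i.1 ∈ P}) := by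
  unfold cellSpan
  congr 1
  ext x
  constructor
  · rintro ⟨l, s, t, hl, rfl⟩
    exact ⟨⟨l, s, t⟩, hl, D.basis_eq l s t⟩
  · rintro ⟨⟨l, s, t⟩, hl, rfl⟩
    exact ⟨l, s, t, hl, D.basis_eq l s t⟩

lemma star_mem_cellSpan {P : Set Λp} {x : A} (hx : x ∈ D.cellSpan P) :
    D.star x ∈ D.cellSpan P := by
  unfold cellSpan at *
  refine mapsTo_span ?_ hx
  rintro _ ⟨l, s, t, hl, rfl⟩
  exact ⟨l, t, s, hl, D.star_c l s t⟩

lemma mul_mem_cellSpan_of_left {P : Set Λp} (hP : IsUpperSet P) {x : A}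
    (hx : x ∈ D.cellSpan P) (a : A) : x * a ∈ D.cellSpan P := by
  induction hx using span_induction with
  | mem x hx =>
    obtain ⟨l, s, t, hl, rfl⟩ := hx
    have hhead : ∑ v, D.coeff l t a v • D.c l s v ∈ D.cellSpan P :=
      sum_mem fun v _ => smul_mem _ _ (subset_span ⟨l, s, v, hl, rfl⟩)
    have htail : D.c l s t * a - ∑ v, D.coeff l t a v • D.c l s v ∈ D.cellSpan P := by
      refine span_mono ?_ (D.mul_rule l s t a)
      rintro _ ⟨l', s', t', hl', rfl⟩
      exact ⟨l', s', t', hP hl'.le hl, rfl⟩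
    simpa using add_mem htail hhead
  | zero => simp
  | add x y _ _ hx hy => rw [add_mul]; exact add_mem hx hy
  | smul r x _ hx => rw [smul_mul_assoc]; exact smul_mem _ _ hx

lemma mul_mem_cellSpan_of_right {P : Set Λp} (hP : IsUpperSet P) {x : A}
    (hx : x ∈ D.cellSpan P) (a : A) : a * x ∈ D.cellSpan P := by
  rw [← D.star_star (a * x), D.star_mul]
  exact D.star_mem_cellSpan (D.mul_mem_cellSpan_of_left hP (D.star_mem_cellSpan hx) _)

lemma c_ne_zero [Nontrivial R] (l : Λp) (s t : T l) : D.c l s t ≠ 0 :=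
  D.basis_eq l s t ▸ D.basis.ne_zero _

variable {Λt M X : Type u}

section Levi

variable [PartialOrder X] (e : M → A) (ι : Λp → Λt) (κ : M → Λt) (α : Λt → X)

def leviIdx : Set ((l : Λp) × (T l × T l)) :=
  {i | ∃ ε, i.2.1 ∈ D.Iset e ι κ α i.1 ε ∧ i.2.2 ∈ D.Iset e ι κ α i.1 ε}

lemma levi_eq_span_basis : D.levi e ι κ α = span R (D.basis '' D.leviIdx e ι κ α) := by
  unfold levi
  congr 1
  ext x
  constructor
  · rintro ⟨l, ε, s, t, hs, ht, rfl⟩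
    exact ⟨⟨l, s, t⟩, ⟨ε, hs, ht⟩, D.basis_eq l s t⟩
  · rintro ⟨⟨l, s, t⟩, ⟨ε, hs, ht⟩, rfl⟩
    exact ⟨l, ε, s, t, hs, ht, D.basis_eq l s t⟩

def leviBasis : Module.Basis (D.leviIdx e ι κ α) R (D.levi e ι κ α) :=
  (Module.Basis.span (D.basis.linearIndependent.comp Subtype.val Subtype.val_injective)).map
    (LinearEquiv.ofEq _ _ (by rw [levi_eq_span_basis, Set.range_comp, Subtype.range_coe]))

lemma leviBasis_apply (i : D.leviIdx e ι κ α) :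
    (D.leviBasis e ι κ α i : A) = D.c i.1.1 i.1.2.1 i.1.2.2 := by
  simp [leviBasis, Module.Basis.span_apply, D.basis_eq]

variable {D e ι κ α}

lemma star_mem_levi {x : A} (hx : x ∈ D.levi e ι κ α) : D.star x ∈ D.levi e ι κ α := by
  unfold levi at *
  refine mapsTo_span ?_ hx
  rintro _ ⟨l, ε, s, t, hs, ht, rfl⟩
  exact ⟨l, ε, t, s, ht, hs, D.star_c l s t⟩

end Levi

variable {D}

lemma repr_c_mul (l : Λp) (s t : T l) (a : A) (v : T l) :
    D.basis.repr (D.c l s t * a) ⟨l, s, v⟩ = D.coeff l t a v := by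
  classical
  have htail : _ ∈ D.cellSpan (Set.Ioi l) := D.mul_rule l s t a
  rw [cellSpan_eq_span_basis, D.basis.mem_span_image] at htail
  have h0 : D.basis.repr (D.c l s t * a - ∑ v, D.coeff l t a v • D.c l s v) ⟨l, s, v⟩ = 0 :=
    Finsupp.notMem_support_iff.1 fun h => lt_irrefl l (htail h)
  rw [map_sub, Finsupp.sub_apply, sub_eq_zero] at h0
  rw [h0]
  simp [← D.basis_eq, Finsupp.single_apply]

namespace IdemData

variable [PartialOrder Λt] [Fintype M] {ι : Λp → Λt} {κ : M → Λt} {e : M → A} {l : Λp}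

lemma monotone (hA : D.IdemData ι κ e) : Monotone ι := fun l l' h => (hA.order_iff l l').2 h

def idx (hA : D.IdemData ι κ e) (t : T l) : M := (hA.exists_idem l t).choose

lemma mem_Tset_idx (hA : D.IdemData ι κ e) (t : T l) : t ∈ D.Tset e l (hA.idx t) :=
  (hA.exists_idem l t).choose_spec

open Classical in
lemma c_mul_e (hA : D.IdemData ι κ e) (s t : T l) (μ : M) :
    D.c l s t * e μ = if hA.idx t = μ then D.c l s t else 0 := by
  have h := (hA.mem_Tset_idx t).1 s
  split_ifs with hμ
  · rw [← hμ, h]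
  · conv_lhs => rw [← h]
    rw [mul_assoc, hA.orth _ _ hμ, mul_zero]

open Classical in
lemma e_mul_c (hA : D.IdemData ι κ e) (s t : T l) (μ : M) :
    e μ * D.c l s t = if hA.idx s = μ then D.c l s t else 0 := by
  have h := (hA.mem_Tset_idx s).2 t
  split_ifs with hμ
  · rw [← hμ, h]
  · conv_lhs => rw [← h]
    rw [← mul_assoc, hA.orth _ _ (Ne.symm hμ), zero_mul]

lemma mul_e_mem_span (hA : D.IdemData ι κ e) (a : A) (μ : M) :
    a * e μ ∈ span R (D.basis '' {i | hA.idx i.2.2 = μ}) := by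
  induction D.basis.mem_span a using span_induction with
  | mem x hx =>
    obtain ⟨⟨l, s, t⟩, rfl⟩ := hx
    rw [D.basis_eq, hA.c_mul_e]
    split_ifs with h
    · exact subset_span ⟨⟨l, s, t⟩, h, D.basis_eq l s t⟩
    · exact zero_mem _
  | zero => simp
  | add x y _ _ hx hy => rw [add_mul]; exact add_mem hx hy
  | smul r x _ hx => rw [smul_mul_assoc]; exact smul_mem _ _ hx

lemma e_mul_mem_span (hA : D.IdemData ι κ e) (μ : M) (a : A) :
    e μ * a ∈ span R (D.basis '' {i | hA.idx i.2.1 = μ}) := by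
  induction D.basis.mem_span a using span_induction with
  | mem x hx =>
    obtain ⟨⟨l, s, t⟩, rfl⟩ := hx
    rw [D.basis_eq, hA.e_mul_c]
    split_ifs with h
    · exact subset_span ⟨⟨l, s, t⟩, h, D.basis_eq l s t⟩
    · exact zero_mem _
  | zero => simp
  | add x y _ _ hx hy => rw [mul_add]; exact add_mem hx hy
  | smul r x _ hx => rw [mul_smul_comm]; exact smul_mem _ _ hx

lemma c_mul_c_of_ne (hA : D.IdemData ι κ e) {l' : Λp} {s t : T l} {s' t' : T l'}
    (h : hA.idx t ≠ hA.idx s') :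
    D.c l s t * D.c l' s' t' = 0 := by
  rw [← (hA.mem_Tset_idx t).1 s, ← (hA.mem_Tset_idx s').2 t', mul_assoc, ← mul_assoc (e _),
    hA.orth _ _ h, zero_mul, mul_zero]

variable [Nontrivial R]

lemma eq_idx_of_mem_Tset (hA : D.IdemData ι κ e) {t : T l} {μ : M} (h : t ∈ D.Tset e l μ) :
    μ = hA.idx t := by
  by_contra hμ
  apply D.c_ne_zero l t t
  rw [← h.1 t, ← (hA.mem_Tset_idx t).1 t, mul_assoc, hA.orth _ _ (Ne.symm hμ), mul_zero]

lemma kappa_idx_le (hA : D.IdemData ι κ e) (t : T l) : κ (hA.idx t) ≤ ι l := by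
  have hup : IsUpperSet {l' | κ (hA.idx t) ≤ ι l'} := fun _ _ h h' => h'.trans (hA.monotone h)
  have h := D.mul_mem_cellSpan_of_right hup (hA.mem_span (hA.idx t)) (D.c l t t)
  rwa [(hA.mem_Tset_idx t).1 t, cellSpan_eq_span_basis, ← D.basis_eq,
    D.basis.self_mem_span_image] at h

variable {α : Λt → X}

lemma mem_Tplus_iff (hA : D.IdemData ι κ e) {t : T l} :
    t ∈ D.Tplus e ι κ α l ↔ α (κ (hA.idx t)) = α (ι l) :=
  ⟨fun ⟨_, hμ, h⟩ => hA.eq_idx_of_mem_Tset hμ ▸ h.symm, fun h => ⟨_, hA.mem_Tset_idx t, h.symm⟩⟩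

variable [PartialOrder X]

lemma mem_Tminus_iff (hA : D.IdemData ι κ e) {t : T l} :
    t ∈ D.Tminus e ι κ α l ↔ α (κ (hA.idx t)) < α (ι l) :=
  ⟨fun ⟨_, hμ, h⟩ => hA.eq_idx_of_mem_Tset hμ ▸ h, fun h => ⟨_, hA.mem_Tset_idx t, h⟩⟩

lemma Tminus_eq_compl (hA : D.IdemData ι κ e) (hα : Monotone α) :
    D.Tminus e ι κ α l = (D.Tplus e ι κ α l)ᶜ := by
  ext t
  rw [Set.mem_compl_iff, hA.mem_Tminus_iff, hA.mem_Tplus_iff]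
  exact (hα (hA.kappa_idx_le t)).lt_iff_ne

lemma exists_mem_Iset_iff (hA : D.IdemData ι κ e) (hα : Monotone α) {x y : T l} :
    (∃ ε, x ∈ D.Iset e ι κ α l ε ∧ y ∈ D.Iset e ι κ α l ε) ↔
      (x ∈ D.Tplus e ι κ α l ↔ y ∈ D.Tplus e ι κ α l) := by
  simp only [Bool.exists_bool, Iset, hA.Tminus_eq_compl hα, Set.mem_compl_iff]
  tauto

lemma eq_of_mem_Iset (hA : D.IdemData ι κ e) (hα : Monotone α) {t : T l} {ε ε' : Bool}
    (h : t ∈ D.Iset e ι κ α l ε) (h' : t ∈ D.Iset e ι κ α l ε') : ε = ε' := by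
  cases ε <;> cases ε' <;> simp_all [Iset, hA.Tminus_eq_compl hα]

lemma mem_Tminus_of_idx_eq (hA : D.IdemData ι κ e) (hα : Monotone α) {l' : Λp} {s : T l}
    {x : T l'} (hs : s ∈ D.Tminus e ι κ α l) (hl : l ≤ l') (hx : hA.idx x = hA.idx s) :
    x ∈ D.Tminus e ι κ α l' := by
  rw [hA.mem_Tminus_iff] at hs ⊢
  rw [hx]
  exact hs.trans_le (hα (hA.monotone hl))

lemma mem_leviIdx_iff (hA : D.IdemData ι κ e) (hα : Monotone α) {i : (l : Λp) × (T l × T l)} :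
    i ∈ D.leviIdx e ι κ α ↔
      (α (κ (hA.idx i.2.1)) = α (ι i.1) ↔ α (κ (hA.idx i.2.2)) = α (ι i.1)) :=
  (hA.exists_mem_Iset_iff hα).trans (by rw [hA.mem_Tplus_iff, hA.mem_Tplus_iff])

lemma c_mul_c_mem_levi (hA : D.IdemData ι κ e) (hα : Monotone α) {l₁ l₂ : Λp} {ε₁ ε₂ : Bool}
    {s t : T l₁} {s' t' : T l₂}
    (hs : s ∈ D.Iset e ι κ α l₁ ε₁) (ht : t ∈ D.Iset e ι κ α l₁ ε₁)
    (hs' : s' ∈ D.Iset e ι κ α l₂ ε₂) (ht' : t' ∈ D.Iset e ι κ α l₂ ε₂) :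
    D.c l₁ s t * D.c l₂ s' t' ∈ D.levi e ι κ α := by
  by_cases hμ : hA.idx t = hA.idx s'
  swap
  · rw [hA.c_mul_c_of_ne hμ]
    exact zero_mem _
  have hrow := hA.e_mul_mem_span (hA.idx s) (D.c l₁ s t * D.c l₂ s' t')
  have hcol := hA.mul_e_mem_span (D.c l₁ s t * D.c l₂ s' t') (hA.idx t')
  rw [← mul_assoc, (hA.mem_Tset_idx s).2 t] at hrow
  rw [mul_assoc, (hA.mem_Tset_idx t').1 s'] at hcol
  have h₁ := D.mul_mem_cellSpan_of_left (isUpperSet_Ici l₁)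
    (subset_span ⟨l₁, s, t, le_rfl, rfl⟩) (D.c l₂ s' t')
  have h₂ := D.mul_mem_cellSpan_of_right (isUpperSet_Ici l₂)
    (subset_span ⟨l₂, s', t', le_rfl, rfl⟩) (D.c l₁ s t)
  rw [cellSpan_eq_span_basis, D.basis.mem_span_image] at h₁ h₂
  rw [D.basis.mem_span_image] at hrow hcol
  rw [levi_eq_span_basis, D.basis.mem_span_image]
  intro i hi
  have hx : hA.idx i.2.1 = hA.idx s := hrow hi
  have hy : hA.idx i.2.2 = hA.idx t' := hcol hi
  have hst := (hA.exists_mem_Iset_iff hα).1 ⟨ε₁, hs, ht⟩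
  have hst' := (hA.exists_mem_Iset_iff hα).1 ⟨ε₂, hs', ht'⟩
  rw [hA.mem_Tplus_iff, hA.mem_Tplus_iff] at hst hst'
  rw [hA.mem_leviIdx_iff hα, hx, hy]
  exact eq_iff_eq_of_chain (hα (hA.kappa_idx_le s)) (hα (hA.kappa_idx_le t))
    (hα (hA.kappa_idx_le s')) (hα (hA.kappa_idx_le t')) (hα (hA.monotone (h₁ hi)))
    (hα (hA.monotone (h₂ hi))) hst hst' (by rw [hμ])

lemma mul_mem_levi (hA : D.IdemData ι κ e) (hα : Monotone α) {x y : A}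
    (hx : x ∈ D.levi e ι κ α) (hy : y ∈ D.levi e ι κ α) : x * y ∈ D.levi e ι κ α := by
  have hle : D.levi e ι κ α * D.levi e ι κ α ≤ D.levi e ι κ α := by
    rw [levi, span_mul_span]
    refine span_le.2 ?_
    rintro _ ⟨_, ⟨l₁, ε₁, s, t, hs, ht, rfl⟩, _, ⟨l₂, ε₂, s', t', hs', ht', rfl⟩, rfl⟩
    exact hA.c_mul_c_mem_levi hα hs ht hs' ht'
  exact hle (mul_mem_mul hx hy)

lemma e_mem_levi (hA : D.IdemData ι κ e) (hα : Monotone α) (μ : M) : e μ ∈ D.levi e ι κ α := by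
  have hrow := hA.e_mul_mem_span μ (e μ)
  have hcol := hA.mul_e_mem_span (e μ) μ
  rw [hA.idem μ, D.basis.mem_span_image] at hrow hcol
  rw [levi_eq_span_basis, D.basis.mem_span_image]
  intro i hi
  rw [hA.mem_leviIdx_iff hα, (hrow hi : hA.idx i.2.1 = μ), (hcol hi : hA.idx i.2.2 = μ)]

lemma one_mem_levi (hA : D.IdemData ι κ e) (hα : Monotone α) : (1 : A) ∈ D.levi e ι κ α :=
  hA.sum_one ▸ sum_mem fun μ _ => hA.e_mem_levi hα μ

lemma coeff_mem_Iset (hA : D.IdemData ι κ e) (hα : Monotone α) {ε : Bool} {t : T l}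
    (ht : t ∈ D.Iset e ι κ α l ε) {a : A} (ha : a ∈ D.levi e ι κ α) {v : T l}
    (hv : D.coeff l t a v ≠ 0) : v ∈ D.Iset e ι κ α l ε := by
  have hmem := hA.mul_mem_levi hα (subset_span ⟨l, ε, t, t, ht, ht, rfl⟩) ha
  rw [levi_eq_span_basis, D.basis.mem_span_image] at hmem
  obtain ⟨ε', htε', hvε'⟩ := hmem (Finsupp.mem_support_iff.2 (by rwa [repr_c_mul]))
  rwa [hA.eq_of_mem_Iset hα ht htε']

lemma c_mul_sub_mem_upperOm (hA : D.IdemData ι κ e) (hα : Monotone α) {ε : Bool} {s t : T l}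
    (hs : s ∈ D.Iset e ι κ α l ε) (ht : t ∈ D.Iset e ι κ α l ε) {a : A}
    (ha : a ∈ D.levi e ι κ α) :
    D.c l s t * a - ∑ v, D.coeff l t a v • D.c l s v ∈ D.upperOm e ι κ α (l, ε) := by
  have hlevi := hA.mul_mem_levi hα (subset_span ⟨l, ε, s, t, hs, ht, rfl⟩) ha
  have hrow := hA.e_mul_mem_span (hA.idx s) (D.c l s t * a)
  rw [← mul_assoc, (hA.mem_Tset_idx s).2 t] at hrow
  rw [levi_eq_span_basis] at hlevi
  have hhead : D.c l s t * a ∈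
      span R (D.basis '' (D.leviIdx e ι κ α ∩ {i | hA.idx i.2.1 = hA.idx s})) := by
    rw [D.basis.mem_span_image] at *
    exact Set.subset_inter hlevi hrow
  have hsum : ∑ v, D.coeff l t a v • D.c l s v ∈ span R (D.basis '' {i | i.1 = l}) :=
    sum_mem fun v _ => smul_mem _ _ (subset_span ⟨⟨l, s, v⟩, rfl, D.basis_eq l s v⟩)
  have htail : _ ∈ D.cellSpan (Set.Ioi l) := D.mul_rule l s t a
  rw [cellSpan_eq_span_basis] at htail
  have hdisj : Disjoint {i : (l : Λp) × (T l × T l) | i.1 ∈ Set.Ioi l} {i | i.1 = l} :=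
    Set.disjoint_left.2 fun _ h h' => h.ne' h'
  refine span_le.2 ?_ (D.basis.sub_mem_span_image_inter hhead hsum htail hdisj)
  rintro _ ⟨⟨L, x, y⟩, ⟨⟨⟨ε', hx, hy⟩, hxs⟩, hlL⟩, rfl⟩
  refine subset_span ⟨(L, ε'), x, y, ?_, hx, hy, D.basis_eq L x y⟩
  have hεε' : ε ≤ ε' := by
    cases ε
    · exact Bool.false_le _
    · exact (hA.eq_of_mem_Iset hα (hA.mem_Tminus_of_idx_eq hα hs hlL.le hxs) hx).le
  rcases hεε'.lt_or_eq with h | h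
  exacts [Or.inl h, Or.inr ⟨h, hlL⟩]

end IdemData

end CellDatum

theorem stmt_8_general
    {R A : Type u} [CommRing R] [Ring A] [Algebra R A]
    {Λp : Type u} [PartialOrder Λp]
    {T : Λp → Type u} [∀ l, Fintype (T l)]
    {Λt M X : Type u} [PartialOrder Λt] [PartialOrder X] [Fintype M]
    (D : CellDatum R A Λp T)
    (ι : Λp → Λt) (κ : M → Λt) (e : M → A)
    (hA : D.IdemData ι κ e)
    (α : Λt → X) (hα : Monotone α) :
    (1 : A) ∈ D.levi e ι κ α ∧
    (∀ x y : A, x ∈ D.levi e ι κ α → y ∈ D.levi e ι κ α → x * y ∈ D.levi e ι κ α) ∧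
    (∀ x : A, x ∈ D.levi e ι κ α → D.star x ∈ D.levi e ι κ α) ∧
    (∃ bb : Module.Basis {p : (l : Λp) × (T l × T l) //
        ∃ ε, p.2.1 ∈ D.Iset e ι κ α p.1 ε ∧ p.2.2 ∈ D.Iset e ι κ α p.1 ε}
        R ↥(D.levi e ι κ α),
      ∀ p, (bb p : A) = D.c p.1.1 p.1.2.1 p.1.2.2) ∧
    (∀ (l : Λp) (ε : Bool) (t : T l), t ∈ D.Iset e ι κ α l ε →
      ∀ a ∈ D.levi e ι κ α, ∃ r : T l → R,
        (∀ v, r v ≠ 0 → v ∈ D.Iset e ι κ α l ε) ∧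
        ∀ s ∈ D.Iset e ι κ α l ε,
          D.c l s t * a - ∑ v, r v • D.c l s v ∈ D.upperOm e ι κ α (l, ε)) := by
  rcases subsingleton_or_nontrivial R with hR | hR
  -- over the zero ring the index `μ` of `t` is not unique, but `A = 0`
  · have : Subsingleton A := Module.subsingleton R A
    have mem (p : Submodule R A) (x : A) : x ∈ p := Subsingleton.elim x 0 ▸ p.zero_mem
    exact ⟨mem _ _, fun _ _ _ _ => mem _ _, fun _ _ => mem _ _,
      ⟨D.leviBasis e ι κ α, D.leviBasis_apply e ι κ α⟩,
      fun _ _ _ _ _ _ => ⟨0, fun _ hv => (hv rfl).elim, fun _ _ => mem _ _⟩⟩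
  · exact ⟨hA.one_mem_levi hα, fun _ _ => hA.mul_mem_levi hα, fun _ => CellDatum.star_mem_levi,
      ⟨D.leviBasis e ι κ α, D.leviBasis_apply e ι κ α⟩,
      fun _ _ _ ht a ha => ⟨D.coeff _ _ a, fun _ => hA.coeff_mem_Iset hα ht ha,
        fun _ hs => hA.c_mul_sub_mem_upperOm hα hs ht ha⟩⟩

/-- for an order-preserving map `α : Λ̃ → X`, the span `A^α` of the
`c^λ_{st}` with `s,t` both in `T⁺_α(λ)` or both in `T⁻_α(λ)` is a subalgebra of `A`
containing `1_A`, stable under `*`, and it is a cellular algebra with cellular basis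
`Z^α` with respect to the poset `Ω` (ordered by `(λ,ε) > (λ',ε')` iff `ε > ε'`, or
`ε = ε'` and `λ > λ'`). -/
theorem stmt_8
    {R A : Type u} [CommRing R] [Ring A] [Algebra R A]
    {Λp : Type u} [PartialOrder Λp] [Fintype Λp]
    {T : Λp → Type u} [∀ l, Fintype (T l)]
    {Λt M X : Type u} [PartialOrder Λt] [PartialOrder X] [Fintype M]
    (D : CellDatum R A Λp T)
    (ι : Λp → Λt) (κ : M → Λt) (e : M → A)
    (hA : D.IdemData ι κ e)
    (α : Λt → X) (hα : Monotone α) :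
    (1 : A) ∈ D.levi e ι κ α ∧
    (∀ x y : A, x ∈ D.levi e ι κ α → y ∈ D.levi e ι κ α → x * y ∈ D.levi e ι κ α) ∧
    (∀ x : A, x ∈ D.levi e ι κ α → D.star x ∈ D.levi e ι κ α) ∧
    (∃ bb : Module.Basis {p : (l : Λp) × (T l × T l) //
        ∃ ε, p.2.1 ∈ D.Iset e ι κ α p.1 ε ∧ p.2.2 ∈ D.Iset e ι κ α p.1 ε}
        R ↥(D.levi e ι κ α),
      ∀ p, (bb p : A) = D.c p.1.1 p.1.2.1 p.1.2.2) ∧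
    (∀ (l : Λp) (ε : Bool) (t : T l), t ∈ D.Iset e ι κ α l ε →
      ∀ a ∈ D.levi e ι κ α, ∃ r : T l → R,
        (∀ v, r v ≠ 0 → v ∈ D.Iset e ι κ α l ε) ∧
        ∀ s ∈ D.Iset e ι κ α l ε,
          D.c l s t * a - ∑ v, r v • D.c l s v ∈ D.upperOm e ι κ α (l, ε)) :=
  stmt_8_general D ι κ e hA α hα
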